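/- arXiv:1208.3015 — 5 statements merged into one kernel-verified Lean document; each statement's English description precedes it below -/
import Mathlib

section
/- Define p_i(a,b) as: p_i if est_a ≤ est_i and lct_i ≤ lct_b; max(0, lct_b − lst_i) if est_a ≤ est_i but lct_i > lct_b; and max(0, min(lct_b, ect_i) − max(est_a, lst_i)) otherwise. Then in every feasible schedule, activity i executes for at least p_i(a,b) time units within the window [est_a, lct_b), i.e., |[S_i, S_i+p_i) ∩ [est_a, lct_b)| ≥ p_i(a,b). -/
open Finset

theorem Int.card_Ico_inter_Ico (a b c d : ℤ) :
    (#(Ico a b ∩ Ico c d) : ℤ) = max 0 (min b d - max a c) := by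
  rw [Ico_inter_Ico, Int.card_Ico]
  omega

/-- The overlap of `[S, S + p)` with a fixed window is unimodal in `S`, so over a range of start
times it is smallest at one of the two extremes. -/
theorem Int.min_card_Ico_add_inter_Ico_le {est lst S : ℤ} (p c d : ℤ) (hest : est ≤ S)
    (hlst : S ≤ lst) :
    min (#(Ico est (est + p) ∩ Ico c d) : ℤ) #(Ico lst (lst + p) ∩ Ico c d) ≤
      #(Ico S (S + p) ∩ Ico c d) := by
  simp only [Int.card_Ico_inter_Ico]
  omega

theorem stmt_5_general (esta lctb : ℤ) (est lst p S : ℤ)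
    (hdom : est ≤ S) (hdom' : S ≤ lst) :
    (if esta ≤ est ∧ lst + p ≤ lctb then p
     else if esta ≤ est then max 0 (lctb - lst)
     else max 0 (min lctb (est + p) - max esta lst)) ≤
      ((Finset.Ico S (S + p) ∩ Finset.Ico esta lctb).card : ℤ) := by
  refine le_trans ?_ (Int.min_card_Ico_add_inter_Ico_le p esta lctb hdom hdom')
  simp only [Int.card_Ico_inter_Ico]
  split_ifs <;> omega

/-- In every feasible schedule, activity `i` executes at least `p_i(a,b)` time units within
the window `[est_a, lct_b)`, where `p_i(a,b)` is given by the three-case formula. -/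
theorem stmt_5 (esta lctb : ℤ) (est lst p S : ℤ)
    (hp : 0 < p) (hwin : esta < lctb)
    (hdom : est ≤ S) (hdom' : S ≤ lst) :
    (if esta ≤ est ∧ lst + p ≤ lctb then p
     else if esta ≤ est then max 0 (lctb - lst)
     else max 0 (min lctb (est + p) - max esta lst)) ≤
      ((Finset.Ico S (S + p) ∩ Finset.Ico esta lctb).card : ℤ) :=
  stmt_5_general esta lctb est lst p S hdom hdom'
end

section
/- TTEF consistency check soundness: Let energy(a,b) = Σ_{i∈V} r_i · p_i(a,b), where p_i(a,b) is the minimal executed time of activity i within window [est_a, lct_b) (as defined via the case analysis on whether i lies in the task interval, has its latest free start before lct_b, or contributes only its compulsory part). If R·(lct_b − est_a) − energy(a,b) < 0, then the cumulative scheduling problem with the current domains is infeasible. -/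
/-!
Sum the resource profile of a feasible schedule over the time points of the window
`[est_a, lct_b)`. By the capacity constraint this is at most `R * (lct_b - est_a)`; exchanging
the two sums it equals `Σ_i r_i * |[est_a, lct_b) ∩ [S_i, S_i + p_i)|`, and whatever start
`S_i ∈ [est_i, lst_i]` is chosen, activity `i` overlaps the window for at least `p_i(a,b)` time
units. Hence `energy(a,b) ≤ R * (lct_b - est_a)`.
-/

open Finset

namespace TimeTableEdgeFinding

/-- The length of `[a, b) ∩ [s, e)`. -/
def overlap (a b s e : ℤ) : ℤ := max 0 (min b e - max a s)

/-- The minimal executed time `p_i(a,b)` of an activity within `[a, b)`. The last case is the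
overlap of the window with the compulsory part `[lst, est + p)`. -/
def minExecTime (a b est lst p : ℤ) : ℤ :=
  if a ≤ est ∧ lst + p ≤ b then p
  else if a ≤ est then max 0 (b - lst)
  else overlap a b lst (est + p)

theorem card_filter_Ico_eq_overlap (a b s e : ℤ) :
    (((Ico a b).filter fun τ => s ≤ τ ∧ τ < e).card : ℤ) = overlap a b s e := by
  have hfilter : (Ico a b).filter (fun τ => s ≤ τ ∧ τ < e) = Ico (max a s) (min b e) := by
    rw [← Ico_inter_Ico]
    ext τ
    simp only [mem_filter, mem_inter, mem_Ico]
  rw [hfilter, Int.card_Ico, Int.toNat_eq_max, overlap, max_comm]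

theorem sum_Ico_load_eq_sum_overlap {ι : Type*} (V : Finset ι) (S p r : ι → ℤ) (a b : ℤ) :
    ∑ τ ∈ Ico a b, ∑ i ∈ V.filter (fun i => S i ≤ τ ∧ τ < S i + p i), r i
      = ∑ i ∈ V, r i * overlap a b (S i) (S i + p i) := by
  simp only [sum_filter]
  rw [sum_comm]
  refine sum_congr rfl fun i _ => ?_
  rw [← sum_filter, sum_const, nsmul_eq_mul, card_filter_Ico_eq_overlap, mul_comm]

theorem minExecTime_le_overlap {a b est lst p s : ℤ} (hp : 0 ≤ p) (hest : est ≤ s)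
    (hlst : s ≤ lst) : minExecTime a b est lst p ≤ overlap a b s (s + p) := by
  unfold minExecTime overlap
  split_ifs <;> omega

end TimeTableEdgeFinding

open TimeTableEdgeFinding in
/-- TTEF consistency check soundness: if `R * (lct_b - est_a) - energy(a,b) < 0`, where
`energy(a,b) = Σ_i r_i * p_i(a,b)` with `p_i(a,b)` the three-case minimal executed time,
then the cumulative scheduling problem with the current domains is infeasible. -/
theorem stmt_6 {ι : Type*} (V : Finset ι) (est lst p r : ι → ℤ) (R : ℤ)
    (esta lctb : ℤ) (hwin : esta < lctb)
    (hp : ∀ i ∈ V, 0 < p i) (hr : ∀ i ∈ V, 0 ≤ r i)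
    (hoverload :
      R * (lctb - esta) -
        (∑ i ∈ V, r i *
          (if esta ≤ est i ∧ lst i + p i ≤ lctb then p i
           else if esta ≤ est i then max 0 (lctb - lst i)
           else max 0 (min lctb (est i + p i) - max esta (lst i)))) < 0) :
    ¬ ∃ S : ι → ℤ, (∀ i ∈ V, est i ≤ S i ∧ S i ≤ lst i) ∧
      (∀ τ : ℤ, ∑ i ∈ V.filter (fun i => S i ≤ τ ∧ τ < S i + p i), r i ≤ R) := by
  rintro ⟨S, hS, hload⟩
  have hcapacity : ∑ τ ∈ Ico esta lctb, ∑ i ∈ V.filter (fun i => S i ≤ τ ∧ τ < S i + p i), r i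
      ≤ R * (lctb - esta) := by
    calc _ ≤ ∑ _τ ∈ Ico esta lctb, R := sum_le_sum fun τ _ => hload τ
      _ = R * (lctb - esta) := by
        rw [sum_const, Int.card_Ico, nsmul_eq_mul, Int.toNat_of_nonneg (by omega), mul_comm]
  have henergy : ∑ i ∈ V, r i * minExecTime esta lctb (est i) (lst i) (p i)
      ≤ ∑ i ∈ V, r i * overlap esta lctb (S i) (S i + p i) :=
    sum_le_sum fun i hi => mul_le_mul_of_nonneg_left
      (minExecTime_le_overlap (hp i hi).le (hS i hi).1 (hS i hi).2) (hr i hi)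
  change R * (lctb - esta) - ∑ i ∈ V, r i * minExecTime esta lctb (est i) (lst i) (p i) < 0
    at hoverload
  rw [sum_Ico_load_eq_sum_overlap] at hcapacity
  linarith
end

section
/- Validity of the naïve overload explanation: Suppose R·(lct_b − est_a) < Σ_{i : p_i(a,b) > 0} r_i · p_i(a,b). Then the conjunction over all i with p_i(a,b) > 0 of the bound literals (est_i ≤ S_i) ∧ (S_i ≤ lst_i) implies falsity, i.e., there is no assignment of start times satisfying est_i ≤ S_i ≤ lst_i for those activities together with the resource capacity constraint. -/
open Finset

/-!
Integrate the resource profile over the window `[est_a, lct_b)`: the capacity constraint bounds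
the total by `R * (lct_b - est_a)`, while by double counting the total is `Σ r_i` times the
length of the overlap of `[S_i, S_i + p_i)` with the window. Any start time in `[est_i, lst_i]`
makes this overlap at least `p_i(a,b)`, which contradicts the overload hypothesis.
-/

def overlapLen (a b s e : ℤ) : ℤ := max 0 (min b e - max a s)

/-- The paper's `p_i(a,b)`, with `[a, b) = [est_a, lct_b)`. -/
def minOverlap (a b est lst p : ℤ) : ℤ :=
  if a ≤ est ∧ lst + p ≤ b then p
  else if a ≤ est then max 0 (b - lst)
  else max 0 (min b (est + p) - max a lst)

theorem card_Ico_inter_Ico_eq_overlapLen (a b s e : ℤ) :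
    ((Ico a b ∩ Ico s e).card : ℤ) = overlapLen a b s e := by
  rw [Ico_inter_Ico, Int.card_Ico, overlapLen]
  omega

theorem minOverlap_le_overlapLen {a b est lst p s : ℤ} (hest : est ≤ s) (hlst : s ≤ lst) :
    minOverlap a b est lst p ≤ overlapLen a b s (s + p) := by
  unfold minOverlap overlapLen
  split_ifs <;> omega

theorem sum_load_Ico_eq_sum_mul_overlapLen {ι : Type*} (V : Finset ι) (S p r : ι → ℤ)
    (a b : ℤ) :
    ∑ τ ∈ Ico a b, ∑ i ∈ V.filter (fun i => S i ≤ τ ∧ τ < S i + p i), r i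
      = ∑ i ∈ V, r i * overlapLen a b (S i) (S i + p i) := by
  rw [sum_comm' (t' := V)
    (s' := fun i => (Ico a b).filter (fun τ => S i ≤ τ ∧ τ < S i + p i))]
  · refine sum_congr rfl fun i _ => ?_
    have hfilter : (Ico a b).filter (fun τ => S i ≤ τ ∧ τ < S i + p i)
        = Ico a b ∩ Ico (S i) (S i + p i) := by
      ext τ
      simp only [mem_filter, mem_inter, mem_Ico]
    rw [sum_const, nsmul_eq_mul, mul_comm, ← card_Ico_inter_Ico_eq_overlapLen, hfilter]
  · intro τ i
    simp only [mem_filter, mem_Ico]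
    tauto

theorem sum_mul_overlapLen_le_of_load_le {ι : Type*} (V : Finset ι) (S p r : ι → ℤ)
    {R a b : ℤ} (hab : a ≤ b)
    (hload : ∀ τ : ℤ, ∑ i ∈ V.filter (fun i => S i ≤ τ ∧ τ < S i + p i), r i ≤ R) :
    ∑ i ∈ V, r i * overlapLen a b (S i) (S i + p i) ≤ R * (b - a) := by
  rw [← sum_load_Ico_eq_sum_mul_overlapLen]
  calc ∑ τ ∈ Ico a b, ∑ i ∈ V.filter (fun i => S i ≤ τ ∧ τ < S i + p i), r i
      ≤ ∑ _τ ∈ Ico a b, R := sum_le_sum fun τ _ => hload τ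
    _ = R * (b - a) := by
      rw [sum_const, Int.card_Ico, nsmul_eq_mul, Int.toNat_of_nonneg (sub_nonneg.mpr hab),
        mul_comm]

theorem stmt_7_general {ι : Type*} (V : Finset ι) (est lst p r : ι → ℤ) (R : ℤ)
    (esta lctb : ℤ) (hwin : esta < lctb)
    (hr : ∀ i ∈ V, 0 ≤ r i)
    (P : ι → ℤ)
    (hP : ∀ i ∈ V, P i =
      (if esta ≤ est i ∧ lst i + p i ≤ lctb then p i
       else if esta ≤ est i then max 0 (lctb - lst i)
       else max 0 (min lctb (est i + p i) - max esta (lst i))))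
    (hoverload : R * (lctb - esta) < ∑ i ∈ V.filter (fun i => 0 < P i), r i * P i) :
    ¬ ∃ S : ι → ℤ, (∀ i ∈ V, 0 < P i → est i ≤ S i ∧ S i ≤ lst i) ∧
      (∀ τ : ℤ, ∑ i ∈ V.filter (fun i => S i ≤ τ ∧ τ < S i + p i), r i ≤ R) := by
  rintro ⟨S, hS, hload⟩
  have hdemand : ∑ i ∈ V.filter (fun i => 0 < P i), r i * P i
      ≤ ∑ i ∈ V, r i * overlapLen esta lctb (S i) (S i + p i) := by
    refine (sum_le_sum fun i hi => ?_).trans <| sum_le_sum_of_subset_of_nonneg (filter_subset _ _)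
      fun i hi _ => mul_nonneg (hr i hi) (le_max_left _ _)
    obtain ⟨hiV, hPi⟩ := mem_filter.mp hi
    obtain ⟨hest, hlst⟩ := hS i hiV hPi
    refine mul_le_mul_of_nonneg_left ?_ (hr i hiV)
    exact (hP i hiV).trans_le (minOverlap_le_overlapLen hest hlst)
  exact hoverload.not_ge (hdemand.trans (sum_mul_overlapLen_le_of_load_le V S p r hwin.le hload))

/-- Validity of the naïve overload explanation: if
`R * (lct_b - est_a) < Σ_{i : p_i(a,b) > 0} r_i * p_i(a,b)`, then the conjunction of the bound
literals `est_i ≤ S_i ∧ S_i ≤ lst_i` over all `i` with `p_i(a,b) > 0` together with the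
resource capacity constraint is unsatisfiable. -/
theorem stmt_7 {ι : Type*} (V : Finset ι) (est lst p r : ι → ℤ) (R : ℤ)
    (esta lctb : ℤ) (hwin : esta < lctb)
    (hp : ∀ i ∈ V, 0 < p i) (hr : ∀ i ∈ V, 0 ≤ r i)
    (P : ι → ℤ)
    (hP : ∀ i ∈ V, P i =
      (if esta ≤ est i ∧ lst i + p i ≤ lctb then p i
       else if esta ≤ est i then max 0 (lctb - lst i)
       else max 0 (min lctb (est i + p i) - max esta (lst i))))
    (hoverload : R * (lctb - esta) < ∑ i ∈ V.filter (fun i => 0 < P i), r i * P i) :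
    ¬ ∃ S : ι → ℤ, (∀ i ∈ V, 0 < P i → est i ≤ S i ∧ S i ≤ lst i) ∧
      (∀ τ : ℤ, ∑ i ∈ V.filter (fun i => S i ≤ τ ∧ τ < S i + p i), r i ≤ R) :=
  stmt_7_general V est lst p r R esta lctb hwin hr P hP hoverload
end

section
/- Energetic-reasoning overload criterion: For any integers a < b, define the minimal intersection of activity i with [a,b) as MI_i(a,b) = max(0, min(b − a, p_i, ect_i − a, b − lst_i)). If Σ_i r_i · MI_i(a,b) > R · (b − a), then the cumulative scheduling problem is infeasible. Moreover MI_i(a,b) equals the minimum over S_i ∈ [est_i, lst_i] of |[S_i, S_i+p_i) ∩ [a,b)|. -/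
/-!
Under any admissible start, activity `i` runs at least `MI_i(a, b)` time points inside `[a, b)`, so
its energy there is at least `r_i · MI_i(a, b)`. Counting the energy spent in `[a, b)` per time point
instead of per activity bounds it by `R · (b - a)`. The minimal intersection, a trapezoid in the
start time, is attained at `est_i` or `lst_i`.
-/

open Finset

/-- The least number of time points of `[a, b)` covered by an activity of duration `p` whose
start lies in `[est, lst]`. -/
def minIntersection (est lst p a b : ℤ) : ℤ :=
  max 0 (min (min (b - a) p) (min (est + p - a) (b - lst)))

theorem card_Ico_inter_Ico_eq_minIntersection (s p a b : ℤ) :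
    (#(Ico s (s + p) ∩ Ico a b) : ℤ) = minIntersection s s p a b := by
  rw [Ico_inter_Ico, Int.card_Ico, Int.toNat_eq_max, minIntersection]
  simp only [min_def, max_def]
  split_ifs <;> omega

theorem minIntersection_mono {est est' lst lst' : ℤ} (p a b : ℤ) (hest : est ≤ est')
    (hlst : lst' ≤ lst) : minIntersection est lst p a b ≤ minIntersection est' lst' p a b := by
  unfold minIntersection
  gcongr

theorem minIntersection_eq_min {est lst : ℤ} (p a b : ℤ) (h : est ≤ lst) :
    minIntersection est lst p a b =
      min (minIntersection est est p a b) (minIntersection lst lst p a b) := by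
  rw [minIntersection, minIntersection, minIntersection, ← max_min_distrib_left]
  congr 1
  omega

theorem minIntersection_le_card {est lst s : ℤ} (p a b : ℤ) (hest : est ≤ s) (hlst : s ≤ lst) :
    minIntersection est lst p a b ≤ #(Ico s (s + p) ∩ Ico a b) := by
  rw [card_Ico_inter_Ico_eq_minIntersection]
  exact minIntersection_mono p a b hest hlst

theorem exists_card_eq_minIntersection {est lst : ℤ} (p a b : ℤ) (h : est ≤ lst) :
    ∃ s, est ≤ s ∧ s ≤ lst ∧ (#(Ico s (s + p) ∩ Ico a b) : ℤ) = minIntersection est lst p a b := by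
  simp only [card_Ico_inter_Ico_eq_minIntersection, minIntersection_eq_min p a b h]
  rcases min_choice (minIntersection est est p a b) (minIntersection lst lst p a b) with hm | hm
  · exact ⟨est, le_rfl, h, hm.symm⟩
  · exact ⟨lst, h, le_rfl, hm.symm⟩

section Energy

variable {ι : Type*} (V : Finset ι) (S p r : ι → ℤ)

theorem sum_mul_card_inter_eq_sum_load (T : Finset ℤ) :
    ∑ i ∈ V, r i * #(Ico (S i) (S i + p i) ∩ T) =
      ∑ τ ∈ T, ∑ i ∈ V.filter (fun i => S i ≤ τ ∧ τ < S i + p i), r i := by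
  have hrow : ∀ i, r i * #(Ico (S i) (S i + p i) ∩ T) =
      ∑ τ ∈ T, if S i ≤ τ ∧ τ < S i + p i then r i else 0 := by
    intro i
    rw [inter_comm, ← filter_mem_eq_inter, sum_ite, sum_const_zero, add_zero, sum_const,
      nsmul_eq_mul, mul_comm]
    simp only [mem_Ico]
  simp only [hrow, sum_filter]
  exact sum_comm

theorem sum_mul_card_inter_Ico_le {R a b : ℤ} (hab : a ≤ b)
    (hcap : ∀ τ : ℤ, ∑ i ∈ V.filter (fun i => S i ≤ τ ∧ τ < S i + p i), r i ≤ R) :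
    ∑ i ∈ V, r i * #(Ico (S i) (S i + p i) ∩ Ico a b) ≤ R * (b - a) := by
  rw [sum_mul_card_inter_eq_sum_load]
  calc ∑ τ ∈ Ico a b, ∑ i ∈ V.filter (fun i => S i ≤ τ ∧ τ < S i + p i), r i
      ≤ ∑ _τ ∈ Ico a b, R := sum_le_sum fun τ _ => hcap τ
    _ = R * (b - a) := by rw [sum_const, Int.card_Ico, nsmul_eq_mul, mul_comm]; congr; omega

end Energy

theorem stmt_15_general {ι : Type*} (V : Finset ι) (est lst p r : ι → ℤ) (R : ℤ)
    (a b : ℤ) (hab : a < b)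
    (hr : ∀ i ∈ V, 0 ≤ r i) (hdom : ∀ i ∈ V, est i ≤ lst i)
    (MI : ι → ℤ)
    (hMI : ∀ i ∈ V, MI i =
      max 0 (min (min (b - a) (p i)) (min (est i + p i - a) (b - lst i)))) :
    (R * (b - a) < ∑ i ∈ V, r i * MI i →
      ¬ ∃ S : ι → ℤ, (∀ i ∈ V, est i ≤ S i ∧ S i ≤ lst i) ∧
        (∀ τ : ℤ, ∑ i ∈ V.filter (fun i => S i ≤ τ ∧ τ < S i + p i), r i ≤ R)) ∧
    (∀ i ∈ V,
      (∀ S : ℤ, est i ≤ S → S ≤ lst i →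
        MI i ≤ ((Finset.Ico S (S + p i) ∩ Finset.Ico a b).card : ℤ)) ∧
      (∃ S : ℤ, est i ≤ S ∧ S ≤ lst i ∧
        ((Finset.Ico S (S + p i) ∩ Finset.Ico a b).card : ℤ) = MI i)) := by
  refine ⟨fun hover ⟨S, hS, hcap⟩ => ?_, fun i hi =>
    ⟨fun s hest hlst => (hMI i hi).trans_le (minIntersection_le_card (p i) a b hest hlst), ?_⟩⟩
  · have henergy : ∑ i ∈ V, r i * MI i ≤ ∑ i ∈ V, r i * #(Ico (S i) (S i + p i) ∩ Ico a b) :=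
      sum_le_sum fun i hi => mul_le_mul_of_nonneg_left
        ((hMI i hi).trans_le (minIntersection_le_card (p i) a b (hS i hi).1 (hS i hi).2)) (hr i hi)
    linarith [sum_mul_card_inter_Ico_le V S p r hab.le hcap]
  · rw [hMI i hi]
    exact exists_card_eq_minIntersection (p i) a b (hdom i hi)

/-- Energetic-reasoning overload criterion: if
`Σ_i r_i * MI_i(a,b) > R * (b - a)` with
`MI_i(a,b) = max 0 (min (min (b-a) p_i) (min (ect_i - a) (b - lst_i)))`, then the cumulative
scheduling problem is infeasible; moreover `MI_i(a,b)` is the minimum over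
`S_i ∈ [est_i, lst_i]` of the executed time of `i` in `[a,b)`. -/
theorem stmt_15 {ι : Type*} (V : Finset ι) (est lst p r : ι → ℤ) (R : ℤ)
    (a b : ℤ) (hab : a < b)
    (hp : ∀ i ∈ V, 0 < p i) (hr : ∀ i ∈ V, 0 ≤ r i) (hdom : ∀ i ∈ V, est i ≤ lst i)
    (MI : ι → ℤ)
    (hMI : ∀ i ∈ V, MI i =
      max 0 (min (min (b - a) (p i)) (min (est i + p i - a) (b - lst i)))) :
    (R * (b - a) < ∑ i ∈ V, r i * MI i →
      ¬ ∃ S : ι → ℤ, (∀ i ∈ V, est i ≤ S i ∧ S i ≤ lst i) ∧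
        (∀ τ : ℤ, ∑ i ∈ V.filter (fun i => S i ≤ τ ∧ τ < S i + p i), r i ≤ R)) ∧
    (∀ i ∈ V,
      (∀ S : ℤ, est i ≤ S → S ≤ lst i →
        MI i ≤ ((Finset.Ico S (S + p i) ∩ Finset.Ico a b).card : ℤ)) ∧
      (∃ S : ℤ, est i ≤ S ∧ S ≤ lst i ∧
        ((Finset.Ico S (S + p i) ∩ Finset.Ico a b).card : ℤ) = MI i)) :=
  stmt_15_general V est lst p r R a b hab hr hdom MI hMI
end

section
/- Edge-finding energy balance: Let u be an activity with r_u > 0 and est_a ≤ est_u < lct_b, and let E' = Σ_{i≠u} r_i·p_i(a,b) be a valid lower bound on the energy consumed by activities other than u in window W = [est_a, lct_b) in every feasible schedule. Then in every feasible schedule, the energy consumed by u in W is at most R·(lct_b − est_a) − E'; hence if u starts at time s, then r_u · max(0, min(lct_b − s, p_u)) ≤ R·(lct_b − est_a) − E', which yields s ≥ lct_b − ⌊(R·(lct_b − est_a) − E')/r_u⌋ whenever p_u ≥ lct_b − s > 0 and the bound is violated otherwise. -/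
/-!
Counting energy time point by time point, the capacity constraint bounds the total energy of all
activities in the window `[est_a, lct_b)` by `R (lct_b - est_a)`. Removing the energy of the other
activities, which is at least `E'`, leaves at most `R (lct_b - est_a) - E'` for `u`. Since `u`
starts inside the window, its energy there is `r_u * max 0 (min (lct_b - S_u) p_u)`, and when
`0 < lct_b - S_u ≤ p_u` this is `r_u (lct_b - S_u)`; dividing by `r_u > 0` gives the bound on `S_u`.
-/

open Finset

theorem sum_mul_card_inter_le_card_mul {ι α M : Type*} [DecidableEq α] [Semiring M]
    [PartialOrder M] [IsOrderedRing M] (V : Finset ι) (T : ι → Finset α) (W : Finset α)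
    (r : ι → M) (R : M) (hcap : ∀ τ, ∑ i ∈ V with τ ∈ T i, r i ≤ R) :
    ∑ i ∈ V, r i * (#(T i ∩ W) : M) ≤ #W * R := by
  have hswap : ∑ i ∈ V, ∑ _τ ∈ T i ∩ W, r i = ∑ τ ∈ W, ∑ i ∈ V with τ ∈ T i, r i :=
    sum_comm' fun i τ => by simp only [mem_inter, mem_filter]; tauto
  calc ∑ i ∈ V, r i * (#(T i ∩ W) : M)
      = ∑ τ ∈ W, ∑ i ∈ V with τ ∈ T i, r i := by
        rw [← hswap]
        exact sum_congr rfl fun i _ => by rw [sum_const, nsmul_eq_mul, Nat.cast_comm]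
    _ ≤ ∑ _τ ∈ W, R := sum_le_sum fun τ _ => hcap τ
    _ = #W * R := by rw [sum_const, nsmul_eq_mul]

theorem Int.card_Ico_add_inter_Ico_of_le {a b s : ℤ} (d : ℤ) (has : a ≤ s) :
    (#(Ico s (s + d) ∩ Ico a b) : ℤ) = max 0 (min (b - s) d) := by
  rw [Ico_inter_Ico, Int.card_Ico, Int.toNat_eq_max]
  omega

theorem stmt_17_general {ι : Type*} [DecidableEq ι] (V : Finset ι) (est lst p r : ι → ℤ) (R : ℤ)
    (esta lctb : ℤ) (hwin : esta < lctb)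
    (u : ι) (hu : u ∈ V) (hru : 0 < r u) (hestu : esta ≤ est u)
    (E' : ℤ)
    (hE' : ∀ S : ι → ℤ, (∀ i ∈ V, est i ≤ S i ∧ S i ≤ lst i) →
      (∀ τ : ℤ, ∑ i ∈ V.filter (fun i => S i ≤ τ ∧ τ < S i + p i), r i ≤ R) →
      E' ≤ ∑ i ∈ V.erase u,
        r i * ((Finset.Ico (S i) (S i + p i) ∩ Finset.Ico esta lctb).card : ℤ)) :
    ∀ S : ι → ℤ, (∀ i ∈ V, est i ≤ S i ∧ S i ≤ lst i) →
      (∀ τ : ℤ, ∑ i ∈ V.filter (fun i => S i ≤ τ ∧ τ < S i + p i), r i ≤ R) →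
      (r u * ((Finset.Ico (S u) (S u + p u) ∩ Finset.Ico esta lctb).card : ℤ)
          ≤ R * (lctb - esta) - E') ∧
      (r u * max 0 (min (lctb - S u) (p u)) ≤ R * (lctb - esta) - E') ∧
      (0 < lctb - S u → lctb - S u ≤ p u →
        lctb - ⌊((R * (lctb - esta) - E' : ℤ) : ℚ) / (r u : ℚ)⌋ ≤ S u) := by
  intro S hS hcap
  have htotal := sum_mul_card_inter_le_card_mul V (fun i => Ico (S i) (S i + p i))
    (Ico esta lctb) r R fun τ => by simpa only [mem_Ico] using hcap τ
  rw [Int.card_Ico, Int.toNat_of_nonneg (by omega), ← add_sum_erase V _ hu] at htotal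
  have hbalance : r u * (#(Ico (S u) (S u + p u) ∩ Ico esta lctb) : ℤ)
      ≤ R * (lctb - esta) - E' := by
    linarith [hE' S hS hcap]
  have hlen : (#(Ico (S u) (S u + p u) ∩ Ico esta lctb) : ℤ) = max 0 (min (lctb - S u) (p u)) :=
    Int.card_Ico_add_inter_Ico_of_le (p u) (hestu.trans (hS u hu).1)
  refine ⟨hbalance, hlen ▸ hbalance, fun hpos hle => ?_⟩
  have hmul : (lctb - S u) * r u ≤ R * (lctb - esta) - E' := by
    rwa [hlen, show max 0 (min (lctb - S u) (p u)) = lctb - S u by omega, mul_comm] at hbalance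
  have hfloor : lctb - S u ≤ ⌊((R * (lctb - esta) - E' : ℤ) : ℚ) / (r u : ℚ)⌋ := by
    rw [Int.le_floor, le_div_iff₀ (by exact_mod_cast hru)]
    exact_mod_cast hmul
  omega

/-- Edge-finding energy balance: if `E'` is a valid lower bound on the energy consumed by
activities other than `u` in the window `W = [est_a, lct_b)` in every feasible schedule, then
in every feasible schedule the energy of `u` in `W` is at most `R (lct_b - est_a) - E'`; hence
`r_u * max 0 (min (lct_b - S_u) p_u) ≤ R (lct_b - est_a) - E'`, which yields
`S_u ≥ lct_b - ⌊(R (lct_b - est_a) - E') / r_u⌋` whenever `0 < lct_b - S_u ≤ p_u`. -/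
theorem stmt_17 {ι : Type*} [DecidableEq ι] (V : Finset ι) (est lst p r : ι → ℤ) (R : ℤ)
    (esta lctb : ℤ) (hwin : esta < lctb)
    (hp : ∀ i ∈ V, 0 < p i) (hr : ∀ i ∈ V, 0 ≤ r i)
    (u : ι) (hu : u ∈ V) (hru : 0 < r u) (hestu : esta ≤ est u) (hestu' : est u < lctb)
    (E' : ℤ)
    (hE' : ∀ S : ι → ℤ, (∀ i ∈ V, est i ≤ S i ∧ S i ≤ lst i) →
      (∀ τ : ℤ, ∑ i ∈ V.filter (fun i => S i ≤ τ ∧ τ < S i + p i), r i ≤ R) →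
      E' ≤ ∑ i ∈ V.erase u,
        r i * ((Finset.Ico (S i) (S i + p i) ∩ Finset.Ico esta lctb).card : ℤ)) :
    ∀ S : ι → ℤ, (∀ i ∈ V, est i ≤ S i ∧ S i ≤ lst i) →
      (∀ τ : ℤ, ∑ i ∈ V.filter (fun i => S i ≤ τ ∧ τ < S i + p i), r i ≤ R) →
      (r u * ((Finset.Ico (S u) (S u + p u) ∩ Finset.Ico esta lctb).card : ℤ)
          ≤ R * (lctb - esta) - E') ∧
      (r u * max 0 (min (lctb - S u) (p u)) ≤ R * (lctb - esta) - E') ∧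
      (0 < lctb - S u → lctb - S u ≤ p u →
        lctb - ⌊((R * (lctb - esta) - E' : ℤ) : ℚ) / (r u : ℚ)⌋ ≤ S u) :=
  stmt_17_general V est lst p r R esta lctb hwin u hu hru hestu E' hE'
end
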